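/- arXiv:2501.13388 — 2 statements merged into one kernel-verified Lean document; each statement's English description precedes it below -/
import Mathlib

section
/- Let p_a, p_b, p_c ∈ ℝ² be non-collinear and let p_d ∈ ℝ² be any point. Set l_{xy} = ‖p_x - p_y‖², q_d = (l_{ab} + l_{ad} - l_{bd}, l_{ac} + l_{ad} - l_{cd})ᵀ, and let G₂ be the Gram matrix of v_{ab}, v_{ac}. Then l_{ad} = (1/4) q_dᵀ G₂⁻¹ q_d. -/
open Matrix

/-!
Write `u = p_b - p_a`, `v = p_c - p_a`, `w = p_d - p_a`. By the law of cosines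
`q_d = 2 (⟪u, w⟫, ⟪v, w⟫)`. As `u, v` span the plane, `w = c₁ u + c₂ v`, so `q_d = 2 G₂ c` and
`q_dᵀ G₂⁻¹ q_d / 4 = cᵀ G₂ c = ‖w‖²`.
-/

open scoped InnerProductSpace
open Submodule

section Gram

variable {𝕜 E ι : Type*} [RCLike 𝕜] [Fintype ι]

theorem Matrix.gram_mulVec [SeminormedAddCommGroup E] [InnerProductSpace 𝕜 E] (v : ι → E)
    (c : ι → 𝕜) : gram 𝕜 v *ᵥ c = fun i ↦ ⟪v i, ∑ j, c j • v j⟫_𝕜 := by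
  ext i
  simp [mulVec, dotProduct, inner_sum, inner_smul_right, mul_comm]

theorem Matrix.star_dotProduct_inv_gram_mulVec_of_mem_span [NormedAddCommGroup E]
    [InnerProductSpace 𝕜 E] [DecidableEq ι] {v : ι → E} (hv : LinearIndependent 𝕜 v) {w : E}
    (hw : w ∈ span 𝕜 (Set.range v)) :
    star (fun i ↦ ⟪v i, w⟫_𝕜) ⬝ᵥ (gram 𝕜 v)⁻¹ *ᵥ (fun i ↦ ⟪v i, w⟫_𝕜) = ⟪w, w⟫_𝕜 := by
  obtain ⟨c, rfl⟩ := mem_span_range_iff_exists_fun 𝕜 |>.mp hw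
  have hdet : IsUnit (gram 𝕜 v).det := (det_gram_ne_zero_iff_linearIndependent.mpr hv).isUnit
  rw [← gram_mulVec, mulVec_mulVec, nonsing_inv_mul _ hdet, one_mulVec, star_mulVec,
    ← dotProduct_mulVec, (isHermitian_gram 𝕜 v).eq, star_dotProduct_gram_mulVec]

end Gram

theorem norm_sub_sq_add_norm_sub_sq_sub_norm_sub_sq {F : Type*} [NormedAddCommGroup F]
    [InnerProductSpace ℝ F] (a b d : F) :
    ‖a - b‖ ^ 2 + ‖a - d‖ ^ 2 - ‖b - d‖ ^ 2 = 2 * ⟪b - a, d - a⟫_ℝ := by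
  rw [norm_sub_rev a b, norm_sub_rev a d, ← sub_sub_sub_cancel_right b d a,
    norm_sub_sq_real (b - a)]
  ring

/-- With non-collinear reference points `p_a, p_b, p_c` and any point `p_d`,
`l_ad = (1/4) q_dᵀ G₂⁻¹ q_d`. -/
theorem sq_dist_eq_quadratic_form (pa pb pc pd : EuclideanSpace ℝ (Fin 2))
    (hnc : LinearIndependent ℝ ![pb - pa, pc - pa]) :
    let l : EuclideanSpace ℝ (Fin 2) → EuclideanSpace ℝ (Fin 2) → ℝ :=
      fun x y => ‖x - y‖ ^ 2
    let G2 : Matrix (Fin 2) (Fin 2) ℝ :=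
      !![inner (𝕜 := ℝ) (pb - pa) (pb - pa), inner (𝕜 := ℝ) (pb - pa) (pc - pa);
         inner (𝕜 := ℝ) (pc - pa) (pb - pa), inner (𝕜 := ℝ) (pc - pa) (pc - pa)]
    let qd : Fin 2 → ℝ :=
      ![l pa pb + l pa pd - l pb pd, l pa pc + l pa pd - l pc pd]
    l pa pd = (1 / 4) * (qd ⬝ᵥ (G2⁻¹ *ᵥ qd)) := by
  intro l G2 qd
  set v := ![pb - pa, pc - pa]
  have hG : G2 = gram ℝ v := by
    ext i j
    fin_cases i <;> fin_cases j <;> rfl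
  have hq : qd = (2 : ℝ) • fun i ↦ ⟪v i, pd - pa⟫_ℝ := by
    ext i
    fin_cases i <;> simp [qd, l, v, norm_sub_sq_add_norm_sub_sq_sub_norm_sub_sq]
  have hspan : pd - pa ∈ span ℝ (Set.range v) := by
    rw [hnc.span_eq_top_of_card_eq_finrank (by simp)]
    trivial
  have hquad := star_dotProduct_inv_gram_mulVec_of_mem_span hnc hspan
  rw [star_trivial] at hquad
  rw [hG, hq, mulVec_smul, dotProduct_smul, smul_dotProduct, hquad, real_inner_self_eq_norm_sq,
    norm_sub_rev]
  simp only [l, smul_eq_mul]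
  ring
end

section
/- Let p_a, p_b, p_c, p_d, p_e be points in ℝ² with p_b, p_c, p_d not collinear. Then the squared distance l_{ae} = ‖p_e - p_a‖² is given by the affine formula l_{ae} = (|V_{a,cd}| l_{be} + |V_{a,db}| l_{ce} + |V_{a,bc}| l_{de} - (l_{ab}|V_{a,cd}| + l_{ac}|V_{a,db}| + l_{ad}|V_{a,bc}|)) / |V_{b,cd}|, where l_{xy} = ‖p_x - p_y‖² and |V_{x,yz}| = det[p_y - p_x, p_z - p_x]. -/
/-- 2x2 determinant of the matrix with columns `p_y - p_x` and `p_z - p_x`. -/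
noncomputable def detV (px py pz : EuclideanSpace ℝ (Fin 2)) : ℝ :=
  (py - px) 0 * (pz - px) 1 - (py - px) 1 * (pz - px) 0

lemma normsq_eq (x y : EuclideanSpace ℝ (Fin 2)) :
    ‖x - y‖ ^ 2 = (x 0 - y 0) ^ 2 + (x 1 - y 1) ^ 2 := by
  rw [EuclideanSpace.norm_eq, Real.sq_sqrt (by positivity)]
  simp [Fin.sum_univ_two, sq_abs]

/-- Affine expression of `l_ae` through `l_be`, `l_ce`, `l_de` when `p_b, p_c, p_d`
are not collinear. -/
theorem sq_dist_affine (pa pb pc pd pe : EuclideanSpace ℝ (Fin 2))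
    (hnc : detV pb pc pd ≠ 0) :
    let l : EuclideanSpace ℝ (Fin 2) → EuclideanSpace ℝ (Fin 2) → ℝ :=
      fun x y => ‖x - y‖ ^ 2
    l pa pe =
      (detV pa pc pd * l pb pe + detV pa pd pb * l pc pe + detV pa pb pc * l pd pe
        - (l pa pb * detV pa pc pd + l pa pc * detV pa pd pb
            + l pa pd * detV pa pb pc)) / detV pb pc pd := by
  intro l
  simp only [l, normsq_eq]
  simp only [detV, PiLp.sub_apply] at *
  field_simp
  ring
end
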